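/- Let n ≥ 1 and let u ∈ ℝⁿ be a unit vector, and let H = { x ∈ ℝⁿ : ⟨x, u⟩ > 0 } be the corresponding open half-space. Then for every C¹ function f : ℝⁿ → ℝ whose (compact) support is contained in H, one has ∫ |∇f(x)|² dγₙ(x) ≥ ∫ f(x)² dγₙ(x), where dγₙ = e^{−φₙ(x)} dx is the standard Gaussian probability measure on ℝⁿ. Equivalently, the first Dirichlet eigenvalue of the weighted Laplacian Δ_{φₙ} on the Gaussian half-space H is at least 1. -/

import Mathlib

/-! The linear function `g x = ⟪x, u⟫` is a positive eigenfunction (eigenvalue 1) of the Gaussian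
Laplacian on the half-space, and the ground-state substitution turns this into the inequality.
Write `w = exp (-φ)`. Along `u` one has `∂ᵤ g = 1` and `∂ᵤ w = -g w`, so `F = f² / g · w` satisfies
`∂ᵤ F = (2 (f / g) ∂ᵤ f - (f / g)²) w - f² w`. Since `∫ ∂ᵤ F = 0` and `2ab - a² ≤ b²`,
`∫ f² w = ∫ (2 (f / g) ∂ᵤ f - (f / g)²) w ≤ ∫ (∂ᵤ f)² w ≤ ∫ ‖∇f‖² w`. -/

noncomputable section

open scoped BigOperators

/-- Euclidean space ℝⁿ. -/
abbrev En (n : ℕ) := EuclideanSpace ℝ (Fin n)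

/-- The Gaussian weight φₙ(x) = |x|²/2 + (n/2)·log(2π). -/
noncomputable def gaussW (n : ℕ) (x : En n) : ℝ :=
  ‖x‖ ^ 2 / 2 + (n / 2 : ℝ) * Real.log (2 * Real.pi)

open MeasureTheory Real
open scoped RealInnerProductSpace

section CompactSupport

variable {E : Type*} [NormedAddCommGroup E] [NormedSpace ℝ E] [MeasurableSpace E] [BorelSpace E]
  (μ : Measure E) {F : E → ℝ}

lemma integrable_lineDeriv_of_hasCompactSupport [IsFiniteMeasureOnCompacts μ]
    (hF : ContDiff ℝ 1 F) (hs : HasCompactSupport F) (v : E) :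
    Integrable (fun x ↦ lineDeriv ℝ F x v) μ := by
  have hF' : (fun x ↦ lineDeriv ℝ F x v) = fun x ↦ fderiv ℝ F x v :=
    funext fun x ↦ ((hF.differentiable one_ne_zero) x).lineDeriv_eq_fderiv
  rw [hF']
  exact ((hF.continuous_fderiv one_ne_zero).clm_apply continuous_const)
    |>.integrable_of_hasCompactSupport
      ((hs.fderiv (𝕜 := ℝ)).comp_left (g := fun L : E →L[ℝ] ℝ ↦ L v) rfl)

lemma integral_lineDeriv_eq_zero_of_hasCompactSupport [FiniteDimensional ℝ E]
    [μ.IsAddHaarMeasure] (hF : ContDiff ℝ 1 F) (hs : HasCompactSupport F) (v : E) :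
    ∫ x, lineDeriv ℝ F x v ∂μ = 0 := by
  obtain ⟨C, hC⟩ := hF.lipschitzWith_of_hasCompactSupport hs one_ne_zero
  simpa [lineDeriv] using
    ((LipschitzWith.const (1 : ℝ)).integral_lineDeriv_mul_eq (μ := μ) hC hs (-v)).symm

end CompactSupport

section LineDeriv

variable {E : Type*} [NormedAddCommGroup E] [NormedSpace ℝ E]

lemma hasLineDerivAt_sq_div_mul {f g w : E → ℝ} {x v : E} {a : ℝ}
    (hf : HasLineDerivAt ℝ f a x v) (hg : HasLineDerivAt ℝ g 1 x v)
    (hw : HasLineDerivAt ℝ w (-(g x * w x)) x v) (hgx : g x ≠ 0) :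
    HasLineDerivAt ℝ (fun y ↦ f y ^ 2 / g y * w y)
      ((2 * (f x / g x) * a - (f x / g x) ^ 2) * w x - f x ^ 2 * w x) x v := by
  have hx : x + (0 : ℝ) • v = x := by simp
  have hf' : HasDerivAt (fun t : ℝ ↦ f (x + t • v)) a 0 := hf
  have hg' : HasDerivAt (fun t : ℝ ↦ g (x + t • v)) 1 0 := hg
  have hw' : HasDerivAt (fun t : ℝ ↦ w (x + t • v)) (-(g x * w x)) 0 := hw
  refine (((hf'.fun_pow 2).fun_div hg' (by rwa [hx])).fun_mul hw').congr_deriv ?_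
  simp only [hx]
  field_simp
  ring

lemma contDiff_sq_div_mul {k : WithTop ℕ∞} {f g w : E → ℝ} (hf : ContDiff ℝ k f)
    (hg : ContDiff ℝ k g) (hw : ContDiff ℝ k w) (hgf : ∀ x ∈ tsupport f, g x ≠ 0) :
    ContDiff ℝ k (fun y ↦ f y ^ 2 / g y * w y) := by
  refine contDiff_iff_contDiffAt.2 fun x ↦ ?_
  by_cases hx : x ∈ tsupport f
  · exact ((hf.contDiffAt.pow 2).div hg.contDiffAt (hgf x hx)).mul hw.contDiffAt
  · refine (contDiffAt_const (c := (0 : ℝ))).congr_of_eventuallyEq ?_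
    filter_upwards [notMem_tsupport_iff_eventuallyEq.1 hx] with y hy
    simp [hy]

end LineDeriv

section Gaussian

variable {E : Type*} [NormedAddCommGroup E] [InnerProductSpace ℝ E]

lemma hasLineDerivAt_inner_left (x u v : E) :
    HasLineDerivAt ℝ (fun y ↦ ⟪y, u⟫) ⟪v, u⟫ x v := by
  simpa [real_inner_comm] using ((innerSL ℝ u).hasFDerivAt (x := x)).hasLineDerivAt v

lemma hasLineDerivAt_exp_neg_norm_sq_div_two_add (c : ℝ) (x v : E) :
    HasLineDerivAt ℝ (fun y ↦ exp (-(‖y‖ ^ 2 / 2 + c)))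
      (-(⟪x, v⟫ * exp (-(‖x‖ ^ 2 / 2 + c)))) x v := by
  have hline : HasDerivAt (fun t : ℝ ↦ x + t • v) v 0 := by
    simpa using ((hasDerivAt_id (0 : ℝ)).smul_const v).const_add x
  refine ((hline.norm_sq.div_const 2).add_const c).neg.exp.congr_deriv ?_
  simp only [zero_smul, add_zero, Pi.neg_apply]
  ring

lemma ContDiff.continuous_gradient [CompleteSpace E] {f : E → ℝ} (hf : ContDiff ℝ 1 f) :
    Continuous (gradient f) :=
  (InnerProductSpace.toDual ℝ E).symm.continuous.comp (hf.continuous_fderiv one_ne_zero)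

lemma HasCompactSupport.gradient [CompleteSpace E] {f : E → ℝ} (hf : HasCompactSupport f) :
    HasCompactSupport (gradient f) :=
  (hf.fderiv (𝕜 := ℝ)).comp_left (g := (InnerProductSpace.toDual ℝ E).symm) (map_zero _)

lemma sq_fderiv_apply_le_norm_gradient_sq [CompleteSpace E] {f : E → ℝ} {u : E} (hu : ‖u‖ = 1)
    (x : E) :
    fderiv ℝ f x u ^ 2 ≤ ‖gradient f x‖ ^ 2 := by
  have h := abs_real_inner_le_norm (gradient f x) u
  rw [hu, mul_one, inner_gradient_left] at h
  exact sq_le_sq.2 (by rwa [abs_norm])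

lemma lineDeriv_sq_div_inner_mul_gaussian {f : E → ℝ} {u : E} (c : ℝ) (hu : ‖u‖ = 1)
    (hf : Differentiable ℝ f) (hsub : tsupport f ⊆ {x | 0 < ⟪x, u⟫}) (x : E) :
    lineDeriv ℝ (fun y ↦ f y ^ 2 / ⟪y, u⟫ * exp (-(‖y‖ ^ 2 / 2 + c))) x u =
      (2 * (f x / ⟪x, u⟫) * fderiv ℝ f x u - (f x / ⟪x, u⟫) ^ 2) * exp (-(‖x‖ ^ 2 / 2 + c))
        - f x ^ 2 * exp (-(‖x‖ ^ 2 / 2 + c)) := by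
  by_cases hx : x ∈ tsupport f
  · have hg : HasLineDerivAt ℝ (fun y ↦ ⟪y, u⟫) 1 x u := by
      simpa [real_inner_self_eq_norm_sq, hu] using hasLineDerivAt_inner_left x u u
    exact (hasLineDerivAt_sq_div_mul ((hf x).hasFDerivAt.hasLineDerivAt u) hg
      (hasLineDerivAt_exp_neg_norm_sq_div_two_add c x u) (hsub hx).ne').lineDeriv
  · have hf0 := notMem_tsupport_iff_eventuallyEq.1 hx
    have hF0 : (fun y ↦ f y ^ 2 / ⟪y, u⟫ * exp (-(‖y‖ ^ 2 / 2 + c))) =ᶠ[nhds x] 0 := by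
      filter_upwards [hf0] with y hy
      simp [hy]
    rw [hF0.lineDeriv_eq]
    simp [lineDeriv, hf0.eq_of_nhds]

end Gaussian

section Main

variable {E : Type*} [NormedAddCommGroup E] [InnerProductSpace ℝ E] [FiniteDimensional ℝ E]
  [MeasurableSpace E] [BorelSpace E]

theorem integral_sq_mul_gaussian_le_integral_norm_gradient_sq (μ : Measure E)
    [μ.IsAddHaarMeasure] (c : ℝ) {u : E} (hu : ‖u‖ = 1) {f : E → ℝ} (hf : ContDiff ℝ 1 f)
    (hsupp : HasCompactSupport f) (hsub : tsupport f ⊆ {x | 0 < ⟪x, u⟫}) :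
    ∫ x, f x ^ 2 * exp (-(‖x‖ ^ 2 / 2 + c)) ∂μ ≤
      ∫ x, ‖gradient f x‖ ^ 2 * exp (-(‖x‖ ^ 2 / 2 + c)) ∂μ := by
  set w : E → ℝ := fun x ↦ exp (-(‖x‖ ^ 2 / 2 + c))
  set F : E → ℝ := fun x ↦ f x ^ 2 / ⟪x, u⟫ * w x
  have hw : ContDiff ℝ 1 w := (((contDiff_norm_sq ℝ).div_const 2).add contDiff_const).neg.exp
  have hF : ContDiff ℝ 1 F := contDiff_sq_div_mul hf (contDiff_id.inner ℝ contDiff_const) hw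
    fun x hx ↦ (hsub hx).ne'
  have hFs : HasCompactSupport F := hsupp.mono <| Function.support_subset_iff'.2 fun x hx ↦ by
    simp [F, Function.notMem_support.1 hx]
  have hfw : Integrable (fun x ↦ f x ^ 2 * w x) μ :=
    ((hf.continuous.pow 2).mul hw.continuous).integrable_of_hasCompactSupport
      (hsupp.mono <| Function.support_subset_iff'.2 fun x hx ↦ by
        simp [Function.notMem_support.1 hx])
  have hgw : Integrable (fun x ↦ ‖gradient f x‖ ^ 2 * w x) μ :=
    ((hf.continuous_gradient.norm.pow 2).mul hw.continuous).integrable_of_hasCompactSupport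
      (hsupp.gradient.mono <| Function.support_subset_iff'.2 fun x hx ↦ by
        simp [Function.notMem_support.1 hx])
  have hFu := integrable_lineDeriv_of_hasCompactSupport μ hF hFs u
  calc ∫ x, f x ^ 2 * w x ∂μ = ∫ x, (lineDeriv ℝ F x u + f x ^ 2 * w x) ∂μ := by
        rw [integral_add hFu hfw, integral_lineDeriv_eq_zero_of_hasCompactSupport μ hF hFs,
          zero_add]
    _ ≤ ∫ x, ‖gradient f x‖ ^ 2 * w x ∂μ := by
        refine integral_mono (hFu.add hfw) hgw fun x ↦ ?_
        rw [lineDeriv_sq_div_inner_mul_gaussian c hu (hf.differentiable one_ne_zero) hsub,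
          sub_add_cancel]
        refine mul_le_mul_of_nonneg_right ?_ (exp_pos _).le
        nlinarith [sq_nonneg (f x / ⟪x, u⟫ - fderiv ℝ f x u),
          sq_fderiv_apply_le_norm_gradient_sq (f := f) hu x]

end Main

theorem stmt10_general (n : ℕ) (u : En n) (hu : ‖u‖ = 1)
    (f : En n → ℝ) (hf : ContDiff ℝ 1 f) (hsupp : HasCompactSupport f)
    (hsub : tsupport f ⊆ {x : En n | 0 < (inner ℝ x u : ℝ)}) :
    (∫ x : En n, f x ^ 2 * Real.exp (-gaussW n x))
      ≤ ∫ x : En n, ‖gradient f x‖ ^ 2 * Real.exp (-gaussW n x) :=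
  integral_sq_mul_gaussian_le_integral_norm_gradient_sq volume _ hu hf hsupp hsub

/-- the first Dirichlet eigenvalue of the Gaussian half-space
H = {x : ⟨x,u⟩ > 0} is at least 1: for every C¹ function `f` with compact support
contained in H one has ∫ f² dγₙ ≤ ∫ |∇f|² dγₙ, where dγₙ = e^{−φₙ} dx. -/
theorem stmt10 (n : ℕ) (hn : 1 ≤ n) (u : En n) (hu : ‖u‖ = 1)
    (f : En n → ℝ) (hf : ContDiff ℝ 1 f) (hsupp : HasCompactSupport f)
    (hsub : tsupport f ⊆ {x : En n | 0 < (inner ℝ x u : ℝ)}) :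
    (∫ x : En n, f x ^ 2 * Real.exp (-gaussW n x))
      ≤ ∫ x : En n, ‖gradient f x‖ ^ 2 * Real.exp (-gaussW n x) :=
  stmt10_general n u hu f hf hsupp hsub
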